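/- For every natural number n, the 2-abelian complexity of the Thue–Morse word satisfies P(8n+4) + P(4n+2) = P(8n+3) + P(4n+3) (equivalently, P(8n+4) = P(8n+3) + P(4n+3) − P(4n+2)). -/

import Mathlib

/-!
A nonempty binary word is determined up to 2-abelian equivalence by its length, first letter,
last letter, number of `1`s and number of `00` and `11`: the counts of `01` and `10` follow from
these. Since `t` is the fixed point of `0 ↦ 01, 1 ↦ 10`, a factor of length `2M + 1` or `2M + 2`
starting at `2j` or `2j + 1` is cut out of the image of the factor at `j` of length `M + 1` or
`M + 2`, and its data are explicit functions of the first letter, last letter and number `p` of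
`00`, `11` of that factor (`p` becomes `M - p` or `M + 1 - p`); complementing letters is a symmetry.
With `X L`, `Y L` the sets of such `p` for factors `0 ⋯ 0`, `0 ⋯ 1` of length `L`, and `K M` the
`p ∈ X (M + 1)` with `p + 1 ∈ X (M + 2)`, inclusion–exclusion gives
`P (2M + 1) = 2|X (M + 1)| + 4|Y (M + 1)|` and
`P (2M + 2) = 2|X (M + 1)| + 2|Y (M + 1)| + 2|X (M + 2)| + 2|Y (M + 2)| - 2|K M|`, while `X` and
`Y` satisfy reflection recursions. Substituting these, the identity reduces to
`|K (4n + 1)| = |Y (2n + 1)|`, which holds because pair counts of sliding windows move by steps of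
one and their parity is fixed by the length and the end letters.
-/


open Fin.NatCast in
/-- The Thue–Morse sequence: sum of binary digits of `n`, mod 2. -/
def tm (n : ℕ) : Fin 2 := ((Nat.digits 2 n).sum : Fin 2)

/-- The factor of the Thue–Morse word of length `n` starting at position `i`. -/
def tmWord (i n : ℕ) : List (Fin 2) := (List.range n).map (fun j => tm (i + j))

/-- A binary word is a factor of the Thue–Morse word. -/
def IsFactor (w : List (Fin 2)) : Prop := ∃ i : ℕ, w = tmWord i w.length

/-- Number of occurrences of the word `x` as a factor of `u`. -/
def occCount (u x : List (Fin 2)) : ℕ :=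
  ((List.range u.length).filter (fun i => (u.drop i).take x.length = x)).length

/-- Two binary words (of equal length) are 2-abelian equivalent: same first letter,
same last letter, and the same number of occurrences of every word of length 2. -/
def TwoAbelianEquiv (u v : List (Fin 2)) : Prop :=
  u.length = v.length ∧ u.take 1 = v.take 1 ∧
  u.drop (u.length - 1) = v.drop (v.length - 1) ∧
  ∀ x : List (Fin 2), x.length = 2 → occCount u x = occCount v x

/-- `P n` is the 2-abelian complexity of the Thue–Morse word: the number of
2-abelian equivalence classes of factors of length `n`. -/
noncomputable def P (n : ℕ) : ℕ :=
  Nat.card (Quot (fun u v : {w : List (Fin 2) // w.length = n ∧ IsFactor w} =>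
    TwoAbelianEquiv u.1 v.1))

/-- `pword w` counts the pairs in `w`: the total number of occurrences of `00` and `11`. -/
def pword (w : List (Fin 2)) : ℕ := occCount w [0, 0] + occCount w [1, 1]

/-- The set of possible pair counts of Thue–Morse factors of length `n`. -/
def pairs (n : ℕ) : Set ℕ :=
  { m | ∃ w : List (Fin 2), w.length = n ∧ IsFactor w ∧ pword w = m }

/-- The set of possible pair counts of Thue–Morse factors of length `n`
occurring at some odd position (pure odd factors). -/
def PAIRS (n : ℕ) : Set ℕ := { m | ∃ i : ℕ, i % 2 = 1 ∧ pword (tmWord i n) = m }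

lemma fin_two_add_one_add_one : ∀ a : Fin 2, a + 1 + 1 = a := by decide

lemma fin_two_val_add_one : ∀ a : Fin 2, (a + 1).val + a.val = 1 := by decide

open Fin.NatCast in
lemma tm_of_ne_zero {n : ℕ} (hn : n ≠ 0) : tm n = ((n % 2 : ℕ) : Fin 2) + tm (n / 2) := by
  unfold tm
  rw [Nat.digits_def' (by norm_num) (Nat.pos_of_ne_zero hn), List.sum_cons, Nat.cast_add]

lemma tm_two_mul (j : ℕ) : tm (2 * j) = tm j := by
  rcases Nat.eq_zero_or_pos j with rfl | hj
  · rfl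
  · rw [tm_of_ne_zero (by omega)]
    simp

lemma tm_two_mul_add_one (j : ℕ) : tm (2 * j + 1) = tm j + 1 := by
  rw [tm_of_ne_zero (by omega), show (2 * j + 1) / 2 = j by omega,
    show (2 * j + 1) % 2 = 1 by omega]
  simp [add_comm]

lemma tm_add_two_pow {K m : ℕ} (hm : m < 2 ^ K) : tm (m + 2 ^ K) = tm m + 1 := by
  induction K generalizing m with
  | zero =>
    obtain rfl : m = 0 := by omega
    rfl
  | succ K ih =>
    obtain ⟨r, rfl | rfl⟩ := Nat.even_or_odd' m
    · rw [show 2 * r + 2 ^ (K + 1) = 2 * (r + 2 ^ K) by ring, tm_two_mul, tm_two_mul,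
        ih (by rw [pow_succ] at hm; omega)]
    · rw [show 2 * r + 1 + 2 ^ (K + 1) = 2 * (r + 2 ^ K) + 1 by ring, tm_two_mul_add_one,
        tm_two_mul_add_one, ih (by rw [pow_succ] at hm; omega)]

lemma exists_tm_complement (j L : ℕ) : ∃ j', ∀ k ≤ L, tm (j' + k) = tm (j + k) + 1 := by
  refine ⟨j + 2 ^ (j + L), fun k hk => ?_⟩
  rw [show j + 2 ^ (j + L) + k = j + k + 2 ^ (j + L) by ring,
    tm_add_two_pow ((show j + k < j + L + 1 by omega).trans_le (Nat.lt_two_pow_self).nat_succ_le)]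

def sameNext (i : ℕ) : ℕ := if tm i = tm (i + 1) then 1 else 0

/-- The number of occurrences of `00` and `11` in `tmWord i (m + 1)`. -/
def sameCount (i m : ℕ) : ℕ := ∑ k ∈ Finset.range m, sameNext (i + k)

def onesCount (i n : ℕ) : ℕ := ∑ k ∈ Finset.range n, (tm (i + k)).val

lemma sameNext_le_one (i : ℕ) : sameNext i ≤ 1 := by
  unfold sameNext; split <;> omega

lemma sameNext_two_mul (k : ℕ) : sameNext (2 * k) = 0 := by
  simp [sameNext, tm_two_mul, tm_two_mul_add_one]

lemma sameNext_two_mul_add_one_add (k : ℕ) : sameNext (2 * k + 1) + sameNext k = 1 := by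
  unfold sameNext
  rw [show 2 * k + 1 + 1 = 2 * (k + 1) by ring, tm_two_mul, tm_two_mul_add_one]
  generalize tm k = a; generalize tm (k + 1) = b
  revert a b; decide

lemma sameNext_parity (i : ℕ) : (sameNext i + 1 + (tm i).val + (tm (i + 1)).val) % 2 = 0 := by
  unfold sameNext
  generalize tm i = a; generalize tm (i + 1) = b
  revert a b; decide

lemma sameCount_le (i m : ℕ) : sameCount i m ≤ m :=
  (Finset.sum_le_card_nsmul _ _ 1 fun k _ => sameNext_le_one _).trans_eq (by simp)

lemma sameCount_add (i m n : ℕ) : sameCount i (m + n) = sameCount i m + sameCount (i + m) n := by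
  simp [sameCount, Finset.sum_range_add, add_assoc]

lemma sameCount_succ (i m : ℕ) : sameCount i (m + 1) = sameCount i m + sameNext (i + m) := by
  rw [sameCount_add]; simp [sameCount]

lemma sameCount_succ' (i m : ℕ) : sameCount i (m + 1) = sameNext i + sameCount (i + 1) m := by
  rw [add_comm m, sameCount_add]; simp [sameCount]

lemma sameCount_shift (i m : ℕ) :
    sameCount (i + 1) m + sameNext i = sameCount i m + sameNext (i + m) := by
  rw [← sameCount_succ, sameCount_succ']; ring

lemma sameCount_parity (j m : ℕ) :
    (sameCount j m + m + (tm j).val + (tm (j + m)).val) % 2 = 0 := by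
  induction m with
  | zero => simp [sameCount]; omega
  | succ m ih =>
    have := sameNext_parity (j + m)
    rw [sameCount_succ, ← add_assoc j]
    omega

lemma sameCount_two_mul_two_mul (j m : ℕ) : sameCount (2 * j) (2 * m) + sameCount j m = m := by
  induction m with
  | zero => simp [sameCount]
  | succ m ih =>
    have := sameNext_two_mul (j + m)
    have := sameNext_two_mul_add_one_add (j + m)
    rw [show 2 * (m + 1) = 2 * m + 1 + 1 by ring, sameCount_succ, sameCount_succ, sameCount_succ,
      show 2 * j + 2 * m = 2 * (j + m) by ring,
      show 2 * j + (2 * m + 1) = 2 * (j + m) + 1 by ring]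
    omega

lemma sameCount_two_mul_two_mul_add_one (j m : ℕ) :
    sameCount (2 * j) (2 * m + 1) + sameCount j m = m := by
  rw [sameCount_succ, show 2 * j + 2 * m = 2 * (j + m) by ring, sameNext_two_mul]
  exact sameCount_two_mul_two_mul j m

lemma sameCount_two_mul_add_one_two_mul (j m : ℕ) :
    sameCount (2 * j + 1) (2 * m) + sameCount j m = m := by
  have h := sameCount_two_mul_two_mul_add_one j m
  rwa [add_comm (2 * m), sameCount_add, sameCount, Finset.sum_range_one, add_zero,
    sameNext_two_mul, zero_add] at h

lemma sameCount_two_mul_add_one_two_mul_add_one (j m : ℕ) :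
    sameCount (2 * j + 1) (2 * m + 1) + sameCount j (m + 1) = m + 1 := by
  have := sameCount_two_mul_add_one_two_mul j m
  have := sameNext_two_mul_add_one_add (j + m)
  rw [sameCount_succ, sameCount_succ, show 2 * j + 1 + 2 * m = 2 * (j + m) + 1 by ring]
  omega

lemma onesCount_succ (i n : ℕ) : onesCount i (n + 1) = onesCount i n + (tm (i + n)).val := by
  simp [onesCount, Finset.sum_range_succ]

lemma onesCount_succ' (i n : ℕ) : onesCount i (n + 1) = (tm i).val + onesCount (i + 1) n := by
  simp [onesCount, Finset.sum_range_succ', add_comm, add_left_comm]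

lemma onesCount_two_mul_two_mul (j m : ℕ) : onesCount (2 * j) (2 * m) = m := by
  induction m with
  | zero => simp [onesCount]
  | succ m ih =>
    have := fin_two_val_add_one (tm (j + m))
    rw [show 2 * (m + 1) = 2 * m + 1 + 1 by ring, onesCount_succ, onesCount_succ,
      show 2 * j + 2 * m = 2 * (j + m) by ring,
      show 2 * j + (2 * m + 1) = 2 * (j + m) + 1 by ring, tm_two_mul, tm_two_mul_add_one]
    omega

lemma onesCount_two_mul_two_mul_add_one (j m : ℕ) :
    onesCount (2 * j) (2 * m + 1) = m + (tm (j + m)).val := by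
  rw [onesCount_succ, onesCount_two_mul_two_mul, ← mul_add, tm_two_mul]

lemma onesCount_two_mul_add_one_two_mul (j m : ℕ) :
    onesCount (2 * j + 1) (2 * m) + (tm j).val = m + (tm (j + m)).val := by
  rw [← onesCount_two_mul_two_mul_add_one, onesCount_succ', tm_two_mul, add_comm]

lemma onesCount_two_mul_add_one_two_mul_add_one (j m : ℕ) :
    onesCount (2 * j + 1) (2 * m + 1) + (tm j).val = m + 1 := by
  have h := onesCount_two_mul_two_mul j (m + 1)
  rw [show 2 * (m + 1) = 2 * m + 1 + 1 by ring, onesCount_succ', tm_two_mul] at h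
  omega

lemma occCount_cons (a : Fin 2) (u x : List (Fin 2)) :
    occCount (a :: u) x = (if (a :: u).take x.length = x then 1 else 0) + occCount u x := by
  simp only [occCount, List.length_cons, ← List.countP_eq_length_filter, List.range_succ_eq_map,
    List.countP_cons, List.countP_map, List.drop_zero]
  rw [add_comm]
  congr 1
  simp

lemma occCount_cons_cons (a b x y : Fin 2) (w : List (Fin 2)) :
    occCount (a :: b :: w) [x, y] =
      (if a = x ∧ b = y then 1 else 0) + occCount (b :: w) [x, y] := by
  rw [occCount_cons]; simp

lemma occCount_singleton (a x y : Fin 2) : occCount [a] [x, y] = 0 := by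
  simp [occCount]

section PairCountIdentities

variable (a : Fin 2) (w : List (Fin 2))

lemma occCount_pairs_sum :
    occCount (a :: w) [0, 0] + occCount (a :: w) [0, 1] + occCount (a :: w) [1, 0] +
      occCount (a :: w) [1, 1] = w.length := by
  induction w generalizing a with
  | nil => simp [occCount_singleton]
  | cons b w ih =>
    have := ih b
    simp only [occCount_cons_cons, List.length_cons]
    fin_cases a <;> fin_cases b <;> simp at this ⊢ <;> omega

lemma occCount_zero_one_add_head :
    occCount (a :: w) [0, 1] + a.val =
      occCount (a :: w) [1, 0] + ((a :: w).getLast (List.cons_ne_nil a w)).val := by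
  induction w generalizing a with
  | nil => simp [occCount_singleton]
  | cons b w ih =>
    have := ih b
    simp only [occCount_cons_cons, List.getLast_cons_cons]
    fin_cases a <;> fin_cases b <;> simp at this ⊢ <;> omega

lemma sum_map_val_eq_occCount :
    ((a :: w).map Fin.val).sum = occCount (a :: w) [0, 1] + occCount (a :: w) [1, 1] + a.val := by
  induction w generalizing a with
  | nil => simp [occCount_singleton]
  | cons b w ih =>
    have := ih b
    simp only [occCount_cons_cons, List.map_cons, List.sum_cons] at this ⊢
    fin_cases a <;> fin_cases b <;> simp at this ⊢ <;> omega

end PairCountIdentities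

def wordData (u : List (Fin 2)) : Option (Fin 2) × Option (Fin 2) × ℕ × ℕ :=
  (u.head?, u.getLast?, (u.map Fin.val).sum, occCount u [0, 0] + occCount u [1, 1])

lemma twoAbelianEquiv_iff_wordData_eq {u v : List (Fin 2)} (hlen : u.length = v.length) :
    TwoAbelianEquiv u v ↔ wordData u = wordData v := by
  match u, v, hlen with
  | [], [], _ => simp [TwoAbelianEquiv, wordData]
  | a :: u, b :: v, hlen =>
    have hu := occCount_pairs_sum a u
    have hv := occCount_pairs_sum b v
    have hu' := occCount_zero_one_add_head a u
    have hv' := occCount_zero_one_add_head b v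
    have su := sum_map_val_eq_occCount a u
    have sv := sum_map_val_eq_occCount b v
    simp only [List.length_cons] at hlen
    rw [TwoAbelianEquiv, List.drop_length_sub_one (List.cons_ne_nil a u),
      List.drop_length_sub_one (List.cons_ne_nil b v)]
    simp only [wordData, List.take_one, List.head?_cons,
      List.getLast?_eq_getLast_of_ne_nil (List.cons_ne_nil _ _), List.length_cons,
      Option.toList_some, List.cons.injEq, Option.some.injEq, Prod.mk.injEq, and_true, hlen,
      true_and]
    constructor
    · rintro ⟨rfl, hlast, hocc⟩
      have h01 := hocc [0, 1] rfl
      have h11 := hocc [1, 1] rfl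
      exact ⟨rfl, hlast, by omega, by rw [hocc [0, 0] rfl, h11]⟩
    · rintro ⟨rfl, hlast, hsum, hsame⟩
      rw [hlast] at hu'
      refine ⟨rfl, hlast, fun x hx => ?_⟩
      match x, hx with
      | [x, y], _ => fin_cases x <;> fin_cases y <;> simp <;> omega

lemma P_eq_ncard_range_wordData (n : ℕ) :
    P n = (Set.range fun i => wordData (tmWord i n)).ncard := by
  let g : {w : List (Fin 2) // w.length = n ∧ IsFactor w} → _ := fun u => wordData u.1
  have e : Quot (fun u v : {w : List (Fin 2) // w.length = n ∧ IsFactor w} =>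
      TwoAbelianEquiv u.1 v.1) ≃ Set.range g :=
    (Quot.congrRight fun u v => twoAbelianEquiv_iff_wordData_eq (u.2.1.trans v.2.1.symm)).trans
      (Setoid.quotientKerEquivRange g)
  rw [P, Nat.card_congr e, Nat.card_coe_set_eq]
  congr 1
  ext d
  constructor
  · rintro ⟨⟨w, hw, i, hi⟩, rfl⟩
    refine ⟨i, ?_⟩
    show wordData (tmWord i n) = wordData w
    rw [hi, hw]
  · rintro ⟨i, rfl⟩
    exact ⟨⟨tmWord i n, by simp [tmWord], i, by simp [tmWord]⟩, rfl⟩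

lemma tmWord_succ (i n : ℕ) : tmWord i (n + 1) = tm i :: tmWord (i + 1) n := by
  simp [tmWord, List.range_succ_eq_map, add_assoc, add_comm 1]

lemma occCount_tmWord_same (i m : ℕ) :
    occCount (tmWord i (m + 1)) [0, 0] + occCount (tmWord i (m + 1)) [1, 1] = sameCount i m := by
  induction m generalizing i with
  | zero => simp [tmWord, occCount_singleton, sameCount]
  | succ m ih =>
    have := ih (i + 1)
    rw [tmWord_succ] at this
    rw [tmWord_succ, tmWord_succ, occCount_cons_cons, occCount_cons_cons, sameCount_succ',
      sameNext]
    generalize tm i = a, tm (i + 1) = b at this ⊢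
    fin_cases a <;> fin_cases b <;> simp at this ⊢ <;> omega

lemma wordData_tmWord (i m : ℕ) :
    wordData (tmWord i (m + 1)) =
      (some (tm i), some (tm (i + m)), onesCount i (m + 1), sameCount i m) := by
  simp only [wordData, occCount_tmWord_same, Prod.mk.injEq, and_true]
  refine ⟨by simp [tmWord_succ], by simp [tmWord, List.getLast?_range], ?_⟩
  simp [tmWord, onesCount, Function.comp_def, Finset.sum_eq_multiset_sum, Finset.range_val,
    Multiset.range]

def pairData (n i : ℕ) : Fin 2 × Fin 2 × ℕ := (tm i, tm (i + (n - 1)), sameCount i (n - 1))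

/-- The data of the factor of length `n` at `i` that determine its 2-abelian class. -/
def classData (n i : ℕ) : (Fin 2 × Fin 2 × ℕ) × ℕ := (pairData n i, onesCount i n)

lemma P_succ_eq_ncard (m : ℕ) : P (m + 1) = (Set.range (classData (m + 1))).ncard := by
  let F : (Fin 2 × Fin 2 × ℕ) × ℕ → Option (Fin 2) × Option (Fin 2) × ℕ × ℕ :=
    fun t => (some t.1.1, some t.1.2.1, t.2, t.1.2.2)
  have hF : F.Injective := by
    rintro ⟨⟨a, b, q⟩, s⟩ ⟨⟨a', b', q'⟩, s'⟩ h
    simp_all [F]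
  have : (fun i => wordData (tmWord i (m + 1))) = F ∘ classData (m + 1) := by
    ext1 i
    simp [wordData_tmWord, F, classData, pairData]
  rw [P_eq_ncard_range_wordData, this, Set.range_comp, Set.ncard_image_of_injective _ hF]

def pairCounts (n : ℕ) (a b : Fin 2) : Set ℕ := {p | (a, b, p) ∈ Set.range (pairData n)}

lemma le_of_mem_range_pairData {n : ℕ} {t : Fin 2 × Fin 2 × ℕ}
    (ht : t ∈ Set.range (pairData n)) : t.2.2 ≤ n - 1 := by
  obtain ⟨j, rfl⟩ := ht
  exact sameCount_le _ _

lemma finite_range_pairData (n : ℕ) : (Set.range (pairData n)).Finite :=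
  (Set.finite_univ.prod (Set.finite_univ.prod (Set.finite_Iic (n - 1)))).subset
    fun _ ht => ⟨trivial, trivial, le_of_mem_range_pairData ht⟩

lemma le_of_mem_pairCounts {n p : ℕ} {a b : Fin 2} (hp : p ∈ pairCounts n a b) : p ≤ n - 1 :=
  le_of_mem_range_pairData hp

lemma finite_pairCounts (n : ℕ) (a b : Fin 2) : (pairCounts n a b).Finite :=
  (Set.finite_Iic (n - 1)).subset fun _ => le_of_mem_pairCounts

lemma add_one_mem_range_pairData {n : ℕ} {a b : Fin 2} {p : ℕ}
    (h : (a, b, p) ∈ Set.range (pairData n)) : (a + 1, b + 1, p) ∈ Set.range (pairData n) := by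
  obtain ⟨j, hj⟩ := h
  obtain ⟨j', hj'⟩ := exists_tm_complement j n
  have hsame : ∀ k < n - 1, sameNext (j' + k) = sameNext (j + k) := fun k hk => by
    simp only [sameNext, add_assoc, hj' k (by omega), hj' (k + 1) (by omega), add_left_inj]
  refine ⟨j', ?_⟩
  simp only [pairData, Prod.mk.injEq] at hj ⊢
  refine ⟨by rw [← hj.1, ← add_zero j', hj' 0 (by omega), add_zero],
    by rw [← hj.2.1, hj' _ (by omega)], ?_⟩
  rw [← hj.2.2, sameCount, sameCount]
  exact Finset.sum_congr rfl fun k hk => hsame k (Finset.mem_range.1 hk)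

lemma add_one_mem_range_pairData_iff {n : ℕ} {a b : Fin 2} {p : ℕ} :
    (a + 1, b + 1, p) ∈ Set.range (pairData n) ↔ (a, b, p) ∈ Set.range (pairData n) := by
  refine ⟨fun h => ?_, add_one_mem_range_pairData⟩
  simpa only [fin_two_add_one_add_one] using add_one_mem_range_pairData h

lemma pairCounts_add_one (n : ℕ) (a b : Fin 2) :
    pairCounts n (a + 1) (b + 1) = pairCounts n a b :=
  Set.ext fun _ => add_one_mem_range_pairData_iff

lemma Set.ncard_fin_two_prod {β : Type*} {S : Set (Fin 2 × β)} (hS : S.Finite) :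
    S.ncard = {b | (0, b) ∈ S}.ncard + {b | (1, b) ∈ S}.ncard := by
  have hS' : S = Prod.mk 0 '' {b | (0, b) ∈ S} ∪ Prod.mk 1 '' {b | (1, b) ∈ S} := by
    ext ⟨a, b⟩
    fin_cases a <;> simp
  have hfin (a : Fin 2) : {b | (a, b) ∈ S}.Finite := hS.preimage (Prod.mk_right_injective a).injOn
  nth_rw 1 [hS']
  rw [Set.ncard_union_eq (by simp [Set.disjoint_left]) ((hfin 0).image _) ((hfin 1).image _),
    Set.ncard_image_of_injective _ (Prod.mk_right_injective _),
    Set.ncard_image_of_injective _ (Prod.mk_right_injective _)]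

lemma ncard_eq_of_add_one_mem_iff {S : Set (Fin 2 × Fin 2 × ℕ)} (hS : S.Finite)
    (hc : ∀ a b p, (a + 1, b + 1, p) ∈ S ↔ (a, b, p) ∈ S) :
    S.ncard = 2 * {p | (0, 0, p) ∈ S}.ncard + 2 * {p | (0, 1, p) ∈ S}.ncard := by
  have hfin (a : Fin 2) : {t | (a, t) ∈ S}.Finite := hS.preimage (Prod.mk_right_injective a).injOn
  rw [Set.ncard_fin_two_prod hS, Set.ncard_fin_two_prod (hfin 0), Set.ncard_fin_two_prod (hfin 1)]
  have h10 : {p | (1, 0, p) ∈ S} = {p | (0, 1, p) ∈ S} := Set.ext fun p => hc 0 1 p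
  have h11 : {p | (1, 1, p) ∈ S} = {p | (0, 0, p) ∈ S} := Set.ext fun p => hc 0 0 p
  simp only [Set.mem_ofPred_eq] at h10 h11 ⊢
  rw [h10, h11]
  ring

lemma ncard_range_pairData (n : ℕ) :
    (Set.range (pairData n)).ncard =
      2 * (pairCounts n 0 0).ncard + 2 * (pairCounts n 0 1).ncard :=
  ncard_eq_of_add_one_mem_iff (finite_range_pairData n) fun _ _ _ =>
    add_one_mem_range_pairData_iff

/-! `classData` of a factor of length `2M + 1` (odd) or `2M + 2` (even) starting at `2j` (even) or
`2j + 1` (odd), in terms of `pairData` of the factor at `j` whose image under `0 ↦ 01, 1 ↦ 10`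
contains it. -/

def oddEvenMap (M : ℕ) (t : Fin 2 × Fin 2 × ℕ) : (Fin 2 × Fin 2 × ℕ) × ℕ :=
  ((t.1, t.2.1, M - t.2.2), M + t.2.1.val)

def oddOddMap (M : ℕ) (t : Fin 2 × Fin 2 × ℕ) : (Fin 2 × Fin 2 × ℕ) × ℕ :=
  ((t.1 + 1, t.2.1 + 1, M - t.2.2), M + 1 - t.1.val)

def evenEvenMap (M : ℕ) (t : Fin 2 × Fin 2 × ℕ) : (Fin 2 × Fin 2 × ℕ) × ℕ :=
  ((t.1, t.2.1 + 1, M - t.2.2), M + 1)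

def evenOddMap (M : ℕ) (t : Fin 2 × Fin 2 × ℕ) : (Fin 2 × Fin 2 × ℕ) × ℕ :=
  ((t.1 + 1, t.2.1, M + 1 - t.2.2), M + 1 + t.2.1.val - t.1.val)

lemma classData_odd_even (M j : ℕ) :
    classData (2 * M + 1) (2 * j) = oddEvenMap M (pairData (M + 1) j) := by
  have := sameCount_two_mul_two_mul j M
  simp only [classData, pairData, oddEvenMap, add_tsub_cancel_right, ← mul_add, tm_two_mul,
    onesCount_two_mul_two_mul_add_one, Prod.mk.injEq, true_and, and_true]
  omega

lemma classData_odd_odd (M j : ℕ) :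
    classData (2 * M + 1) (2 * j + 1) = oddOddMap M (pairData (M + 1) j) := by
  have := sameCount_two_mul_add_one_two_mul j M
  have := onesCount_two_mul_add_one_two_mul_add_one j M
  simp only [classData, pairData, oddOddMap, add_tsub_cancel_right, tm_two_mul_add_one,
    show 2 * j + 1 + 2 * M = 2 * (j + M) + 1 by ring, Prod.mk.injEq, true_and]
  omega

lemma classData_even_even (M j : ℕ) :
    classData (2 * M + 2) (2 * j) = evenEvenMap M (pairData (M + 1) j) := by
  have := sameCount_two_mul_two_mul_add_one j M
  have := onesCount_two_mul_two_mul j (M + 1)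
  rw [mul_add, mul_one] at this
  simp only [classData, pairData, evenEvenMap, show 2 * M + 2 - 1 = 2 * M + 1 by omega,
    add_tsub_cancel_right, tm_two_mul, tm_two_mul_add_one,
    show 2 * j + (2 * M + 1) = 2 * (j + M) + 1 by ring, Prod.mk.injEq, true_and]
  omega

lemma classData_even_odd (M j : ℕ) :
    classData (2 * M + 2) (2 * j + 1) = evenOddMap M (pairData (M + 2) j) := by
  have := sameCount_two_mul_add_one_two_mul_add_one j M
  have := onesCount_two_mul_add_one_two_mul j (M + 1)
  rw [mul_add, mul_one, ← add_assoc] at this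
  simp only [classData, pairData, evenOddMap, show 2 * M + 2 - 1 = 2 * M + 1 by omega,
    show M + 2 - 1 = M + 1 by omega, tm_two_mul, tm_two_mul_add_one,
    show 2 * j + 1 + (2 * M + 1) = 2 * (j + M + 1) by ring, ← add_assoc, Prod.mk.injEq,
    true_and]
  omega

lemma Set.range_eq_range_two_mul_union {α : Type*} (f : ℕ → α) :
    Set.range f = Set.range (fun j => f (2 * j)) ∪ Set.range (fun j => f (2 * j + 1)) := by
  ext x
  simp only [Set.mem_union, Set.mem_range]
  constructor
  · rintro ⟨i, rfl⟩
    obtain ⟨j, rfl | rfl⟩ := Nat.even_or_odd' i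
    exacts [Or.inl ⟨j, rfl⟩, Or.inr ⟨j, rfl⟩]
  · rintro (⟨j, rfl⟩ | ⟨j, rfl⟩) <;> exact ⟨_, rfl⟩

lemma range_classData_odd (M : ℕ) :
    Set.range (classData (2 * M + 1)) =
      oddEvenMap M '' Set.range (pairData (M + 1)) ∪
        oddOddMap M '' Set.range (pairData (M + 1)) := by
  simp only [Set.range_eq_range_two_mul_union (classData _), classData_odd_even,
    classData_odd_odd, ← Set.range_comp, Function.comp_def]

lemma range_classData_even (M : ℕ) :
    Set.range (classData (2 * M + 2)) =
      evenEvenMap M '' Set.range (pairData (M + 1)) ∪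
        evenOddMap M '' Set.range (pairData (M + 2)) := by
  simp only [Set.range_eq_range_two_mul_union (classData _), classData_even_even,
    classData_even_odd, ← Set.range_comp, Function.comp_def]

lemma injOn_of_fst_eq {c : ℕ} {f : Fin 2 × Fin 2 × ℕ → (Fin 2 × Fin 2 × ℕ) × ℕ}
    (u v : Fin 2)
    (hf : ∀ t, (f t).1 = (t.1 + u, t.2.1 + v, c - t.2.2)) : Set.InjOn f {t | t.2.2 ≤ c} := by
  rintro ⟨a, b, q⟩ hq ⟨a', b', q'⟩ hq' h
  have h1 := hf (a, b, q) ▸ hf (a', b', q') ▸ congrArg Prod.fst h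
  simp only [Prod.mk.injEq, add_left_inj, Set.mem_ofPred_eq] at h1 hq hq' ⊢
  exact ⟨h1.1, h1.2.1, by omega⟩

lemma range_pairData_subset_setOf_le (M : ℕ) :
    Set.range (pairData (M + 1)) ⊆ {t | t.2.2 ≤ M} :=
  fun _ ht => le_of_mem_range_pairData ht

lemma Set.ncard_image_union_image_add_ncard {α β : Type*} {f g : α → β} {A B D : Set α}
    (hA : A.Finite) (hB : B.Finite) (hf : Set.InjOn f A) (hg : Set.InjOn g B) (hD : D ⊆ A)
    (hAB : f '' A ∩ g '' B = f '' D) :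
    (f '' A ∪ g '' B).ncard + D.ncard = A.ncard + B.ncard := by
  rw [← hf.ncard_image, ← hg.ncard_image, ← (hf.mono hD).ncard_image, ← hAB]
  exact Set.ncard_union_add_ncard_inter _ _ (hA.image f) (hB.image g)

lemma image_oddEvenMap_inter_image_oddOddMap (M : ℕ) :
    oddEvenMap M '' Set.range (pairData (M + 1)) ∩ oddOddMap M '' Set.range (pairData (M + 1)) =
      oddEvenMap M '' {t ∈ Set.range (pairData (M + 1)) | t.1 = t.2.1} := by
  ext x
  constructor
  · rintro ⟨⟨⟨a, b, q⟩, ht, rfl⟩, ⟨⟨a', b', q'⟩, -, h⟩⟩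
    refine ⟨(a, b, q), ⟨ht, ?_⟩, rfl⟩
    simp only [oddEvenMap, oddOddMap, Prod.mk.injEq] at h
    obtain ⟨⟨rfl, rfl, -⟩, h⟩ := h
    revert h
    fin_cases a' <;> fin_cases b' <;> simp
  · rintro ⟨⟨a, b, q⟩, ⟨ht, rfl : a = b⟩, rfl⟩
    refine ⟨⟨_, ht, rfl⟩, ⟨(a + 1, a + 1, q), add_one_mem_range_pairData ht, ?_⟩⟩
    fin_cases a <;> simp [oddEvenMap, oddOddMap]

lemma image_evenEvenMap_inter_image_evenOddMap (M : ℕ) :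
    evenEvenMap M '' Set.range (pairData (M + 1)) ∩ evenOddMap M '' Set.range (pairData (M + 2)) =
      evenEvenMap M '' {t ∈ Set.range (pairData (M + 1)) |
        t.1 = t.2.1 ∧ (t.1 + 1, t.1 + 1, t.2.2 + 1) ∈ Set.range (pairData (M + 2))} := by
  ext x
  constructor
  · rintro ⟨⟨⟨a, b, q⟩, ht, rfl⟩, ⟨⟨a', b', q'⟩, ht', h⟩⟩
    have hq := le_of_mem_range_pairData ht
    have hq' := le_of_mem_range_pairData ht'
    simp only [evenEvenMap, evenOddMap, Prod.mk.injEq] at h hq hq'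
    obtain ⟨⟨rfl, hb, hq⟩, h⟩ := h
    obtain rfl : a' = b' := by revert h; fin_cases a' <;> fin_cases b' <;> simp
    obtain rfl : b = a' + 1 := by rw [hb, fin_two_add_one_add_one]
    obtain rfl : q' = q + 1 := by omega
    refine ⟨(a' + 1, a' + 1, q), ⟨ht, rfl, ?_⟩, rfl⟩
    simpa [fin_two_add_one_add_one] using ht'
  · rintro ⟨⟨a, b, q⟩, ⟨ht, rfl : a = b, ht'⟩, rfl⟩
    refine ⟨⟨_, ht, rfl⟩, ⟨_, ht', ?_⟩⟩
    simp [evenEvenMap, evenOddMap, fin_two_add_one_add_one]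

lemma ncard_range_pairData_diag (n : ℕ) :
    {t ∈ Set.range (pairData n) | t.1 = t.2.1}.ncard = 2 * (pairCounts n 0 0).ncard := by
  rw [ncard_eq_of_add_one_mem_iff ((finite_range_pairData n).subset fun _ h => h.1)
    fun a b p => by simp only [Set.mem_sep_iff, add_one_mem_range_pairData_iff, add_left_inj]]
  simp [pairCounts]

def extendableCounts (M : ℕ) : Set ℕ :=
  {p ∈ pairCounts (M + 1) 0 0 | p + 1 ∈ pairCounts (M + 2) 0 0}

lemma ncard_range_pairData_diag_extendable (M : ℕ) :
    {t ∈ Set.range (pairData (M + 1)) |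
        t.1 = t.2.1 ∧ (t.1 + 1, t.1 + 1, t.2.2 + 1) ∈ Set.range (pairData (M + 2))}.ncard =
      2 * (extendableCounts M).ncard := by
  rw [ncard_eq_of_add_one_mem_iff ((finite_range_pairData _).subset fun _ h => h.1)
    fun a b p => by simp only [Set.mem_sep_iff, add_one_mem_range_pairData_iff, add_left_inj]]
  have h11 (p : ℕ) := add_one_mem_range_pairData_iff (n := M + 2) (a := 0) (b := 0) (p := p)
  simp only [zero_add] at h11
  simp only [Set.mem_ofPred_eq, zero_add, h11, zero_ne_one, true_and, false_and, and_false,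
    Set.ofPred_false, Set.ncard_empty]
  rfl

lemma P_two_mul_add_one (M : ℕ) :
    P (2 * M + 1) = 2 * (pairCounts (M + 1) 0 0).ncard + 4 * (pairCounts (M + 1) 0 1).ncard := by
  have hdom := range_pairData_subset_setOf_le M
  have h := Set.ncard_image_union_image_add_ncard
    (finite_range_pairData _) (finite_range_pairData _)
    ((injOn_of_fst_eq 0 0 fun t => by simp [oddEvenMap]).mono hdom)
    ((injOn_of_fst_eq 1 1 fun t => by simp [oddOddMap]).mono hdom) (Set.sep_subset _ _)
    (image_oddEvenMap_inter_image_oddOddMap M)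
  rw [← range_classData_odd, ← P_succ_eq_ncard, ncard_range_pairData_diag,
    ncard_range_pairData] at h
  omega

lemma P_two_mul_add_two (M : ℕ) :
    P (2 * M + 2) + 2 * (extendableCounts M).ncard =
      2 * (pairCounts (M + 1) 0 0).ncard + 2 * (pairCounts (M + 1) 0 1).ncard +
        2 * (pairCounts (M + 2) 0 0).ncard + 2 * (pairCounts (M + 2) 0 1).ncard := by
  have h := Set.ncard_image_union_image_add_ncard
    (finite_range_pairData _) (finite_range_pairData _)
    ((injOn_of_fst_eq 0 1 fun t => by simp [evenEvenMap]).mono (range_pairData_subset_setOf_le M))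
    ((injOn_of_fst_eq 1 0 fun t => by simp [evenOddMap]).mono
      (range_pairData_subset_setOf_le (M + 1)))
    (Set.sep_subset _ _) (image_evenEvenMap_inter_image_evenOddMap M)
  rw [← range_classData_even, ← P_succ_eq_ncard, ncard_range_pairData_diag_extendable,
    ncard_range_pairData, ncard_range_pairData] at h
  simp only [add_assoc, Nat.reduceAdd] at h
  omega

lemma mem_pairCounts_iff {n p : ℕ} {a b : Fin 2} :
    p ∈ pairCounts n a b ↔ ∃ o, ((a, b, p), o) ∈ Set.range (classData n) :=
  ⟨fun ⟨i, hi⟩ => ⟨_, i, by rw [classData, hi]⟩,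
    fun ⟨_, i, hi⟩ => ⟨i, congrArg Prod.fst hi⟩⟩

lemma pairCounts_two_mul_add_one (M : ℕ) (a b : Fin 2) :
    pairCounts (2 * M + 1) a b = (M - ·) '' pairCounts (M + 1) a b := by
  ext p
  rw [mem_pairCounts_iff, range_classData_odd]
  constructor
  · rintro ⟨o, ⟨⟨a', b', q⟩, ht, h⟩ | ⟨⟨a', b', q⟩, ht, h⟩⟩
    · simp only [oddEvenMap, Prod.mk.injEq] at h
      obtain ⟨⟨rfl, rfl, rfl⟩, -⟩ := h
      exact ⟨q, ht, rfl⟩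
    · simp only [oddOddMap, Prod.mk.injEq] at h
      obtain ⟨⟨rfl, rfl, rfl⟩, -⟩ := h
      exact ⟨q, add_one_mem_range_pairData ht, rfl⟩
  · rintro ⟨q, hq, rfl⟩
    exact ⟨_, Or.inl ⟨(a, b, q), hq, rfl⟩⟩

lemma pairCounts_two_mul_add_two (M : ℕ) (a b : Fin 2) :
    pairCounts (2 * M + 2) a b =
      (M - ·) '' pairCounts (M + 1) a (b + 1) ∪
        (M + 1 - ·) '' pairCounts (M + 2) (a + 1) b := by
  ext p
  rw [mem_pairCounts_iff, range_classData_even]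
  constructor
  · rintro ⟨o, ⟨⟨a', b', q⟩, ht, h⟩ | ⟨⟨a', b', q⟩, ht, h⟩⟩
    · simp only [evenEvenMap, Prod.mk.injEq] at h
      obtain ⟨⟨rfl, rfl, rfl⟩, -⟩ := h
      exact Or.inl ⟨q, by rwa [pairCounts, fin_two_add_one_add_one], rfl⟩
    · simp only [evenOddMap, Prod.mk.injEq] at h
      obtain ⟨⟨rfl, rfl, rfl⟩, -⟩ := h
      exact Or.inr ⟨q, by rwa [pairCounts, fin_two_add_one_add_one], rfl⟩
  · rintro (⟨q, hq, rfl⟩ | ⟨q, hq, rfl⟩)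
    · exact ⟨_, Or.inl ⟨(a, b + 1, q), hq,
        Prod.ext (by simp [evenEvenMap, fin_two_add_one_add_one]) rfl⟩⟩
    · exact ⟨_, Or.inr ⟨(a + 1, b, q), hq,
        Prod.ext (by simp [evenOddMap, fin_two_add_one_add_one]) rfl⟩⟩

lemma injOn_tsub_pairCounts (M : ℕ) (a b : Fin 2) :
    Set.InjOn (M - ·) (pairCounts (M + 1) a b) := fun p hp q hq h => by
  have := le_of_mem_pairCounts hp
  have := le_of_mem_pairCounts hq
  simp only at h ⊢
  omega

lemma ncard_pairCounts_two_mul_add_one (M : ℕ) (a b : Fin 2) :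
    (pairCounts (2 * M + 1) a b).ncard = (pairCounts (M + 1) a b).ncard := by
  rw [pairCounts_two_mul_add_one, (injOn_tsub_pairCounts M a b).ncard_image]

lemma pairCounts_two_mul_add_one_subset (M : ℕ) (a b : Fin 2) :
    pairCounts (2 * M + 1) a b ⊆ pairCounts (2 * M + 2) a (b + 1) := by
  rw [pairCounts_two_mul_add_one, pairCounts_two_mul_add_two, fin_two_add_one_add_one]
  exact Set.subset_union_left

lemma Nat.exists_eq_of_le_of_le_of_step {f : ℕ → ℕ}
    (hf : ∀ k, f (k + 1) ≤ f k + 1 ∧ f k ≤ f (k + 1) + 1) {a b c : ℕ} (ha : f a ≤ c)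
    (hb : c ≤ f b) : ∃ k, f k = c := by
  rcases le_total a b with hab | hba
  · induction b, hab using Nat.le_induction with
    | base => exact ⟨a, le_antisymm ha hb⟩
    | succ b _ ih =>
      by_cases h : c ≤ f b
      · exact ih h
      · exact ⟨b + 1, by have := (hf b).1; omega⟩
  · induction a, hba using Nat.le_induction with
    | base => exact ⟨b, le_antisymm ha hb⟩
    | succ a _ ih =>
      by_cases h : f a ≤ c
      · exact ih h
      · exact ⟨a + 1, by have := (hf a).2; omega⟩

/-- Sliding a window of length `m + 1` changes its pair count by at most one. The prefixes of
length `m + 1` of the factors behind `h0` and `h1` have at most and at least `p` pairs, so some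
window has exactly `p`, and by parity its end letters differ. -/
lemma mem_pairCounts_zero_one {m p : ℕ} (h0 : p ∈ pairCounts (m + 2) 0 0)
    (h1 : p + 1 ∈ pairCounts (m + 2) 0 1) : p ∈ pairCounts (m + 1) 0 1 := by
  obtain ⟨i, hi⟩ := h0
  obtain ⟨i', hi'⟩ := h1
  simp only [pairData, show m + 2 - 1 = m + 1 by omega, Prod.mk.injEq] at hi hi'
  have hstep (k : ℕ) : sameCount (k + 1) m ≤ sameCount k m + 1 ∧
      sameCount k m ≤ sameCount (k + 1) m + 1 := by
    have := sameCount_shift k m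
    have := sameNext_le_one k
    have := sameNext_le_one (k + m)
    omega
  obtain ⟨k, hk⟩ := Nat.exists_eq_of_le_of_le_of_step (f := (sameCount · m)) hstep
    (a := i) (b := i') (c := p) (by rw [← hi.2.2, sameCount_succ]; omega)
    (by have := sameNext_le_one (i' + m); rw [sameCount_succ] at hi'; omega)
  have hpar := sameCount_parity i (m + 1)
  have hpar' := sameCount_parity k m
  rw [hi.1, hi.2.1, hi.2.2] at hpar
  rw [hk] at hpar'
  have hne : tm k ≠ tm (k + m) := fun heq => by rw [heq] at hpar'; simp at hpar; omega
  have hmem : (tm k, tm (k + m), p) ∈ Set.range (pairData (m + 1)) :=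
    ⟨k, by simp [pairData, hk]⟩
  generalize tm k = a, tm (k + m) = b at hne hmem
  fin_cases a <;> fin_cases b <;> simp at hne
  exacts [hmem, add_one_mem_range_pairData_iff (a := 0) (b := 1) |>.1 hmem]

lemma ncard_pairCounts_two_mul_add_two_zero_one (M : ℕ) :
    (pairCounts (2 * M + 2) 0 1).ncard + (extendableCounts M).ncard =
      (pairCounts (M + 1) 0 0).ncard + (pairCounts (M + 2) 0 0).ncard := by
  have hY : pairCounts (2 * M + 2) 0 1 =
      (M - ·) '' pairCounts (M + 1) 0 0 ∪ (M + 1 - ·) '' pairCounts (M + 2) 0 0 := by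
    rw [pairCounts_two_mul_add_two, ← pairCounts_add_one (M + 2) 0 0]
    rfl
  have hinter : (M - ·) '' pairCounts (M + 1) 0 0 ∩ (M + 1 - ·) '' pairCounts (M + 2) 0 0 =
      (M - ·) '' extendableCounts M := by
    ext x
    constructor
    · rintro ⟨⟨u, hu, rfl⟩, ⟨v, hv, h⟩⟩
      have := le_of_mem_pairCounts hu
      have := le_of_mem_pairCounts hv
      obtain rfl : v = u + 1 := by simp only at h; omega
      exact ⟨u, ⟨hu, hv⟩, rfl⟩
    · rintro ⟨u, ⟨hu, hu'⟩, rfl⟩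
      exact ⟨⟨u, hu, rfl⟩, ⟨u + 1, hu', by simp only; omega⟩⟩
  rw [hY]
  exact Set.ncard_image_union_image_add_ncard (finite_pairCounts _ 0 0) (finite_pairCounts _ 0 0)
    (injOn_tsub_pairCounts M 0 0) (injOn_tsub_pairCounts (M + 1) 0 0) (Set.sep_subset _ _) hinter

lemma extendableCounts_two_mul_add_one (M : ℕ)
    (hM : pairCounts (M + 1) 0 1 ⊆ pairCounts (M + 2) 0 0) :
    extendableCounts (2 * M + 1) = (M - ·) '' pairCounts (M + 1) 0 1 := by
  ext p
  rw [extendableCounts, Set.mem_sep_iff, show 2 * M + 1 + 1 = 2 * M + 2 from rfl,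
    show 2 * M + 1 + 2 = 2 * (M + 1) + 1 by ring, pairCounts_two_mul_add_two,
    pairCounts_two_mul_add_one]
  constructor
  · rintro ⟨hp | ⟨w, hw, rfl⟩, ⟨v, hv, hvw⟩⟩
    · exact hp
    · replace hw : w ∈ pairCounts (M + 2) 0 1 := add_one_mem_range_pairData_iff (b := 1) |>.1 hw
      have := le_of_mem_pairCounts hw
      have := le_of_mem_pairCounts hv
      obtain rfl : w = v + 1 := by simp only at hvw; omega
      exact ⟨v, mem_pairCounts_zero_one hv hw, by simp only; omega⟩
  · rintro ⟨u, hu, rfl⟩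
    have := le_of_mem_pairCounts hu
    exact ⟨Or.inl ⟨u, hu, rfl⟩, ⟨u, hM hu, by simp only; omega⟩⟩

lemma ncard_extendableCounts_four_mul_add_one (n : ℕ) :
    (extendableCounts (4 * n + 1)).ncard = (pairCounts (2 * n + 1) 0 1).ncard := by
  rw [show 4 * n + 1 = 2 * (2 * n) + 1 by ring,
    extendableCounts_two_mul_add_one _ (pairCounts_two_mul_add_one_subset n 0 1),
    (injOn_tsub_pairCounts _ 0 1).ncard_image]

theorem thueMorse_P_eight_n_add_four (n : ℕ) :
    P (8 * n + 4) + P (4 * n + 2) = P (8 * n + 3) + P (4 * n + 3) := by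
  have hP8n4 := P_two_mul_add_two (4 * n + 1)
  have hP4n2 := P_two_mul_add_two (2 * n)
  have hP8n3 := P_two_mul_add_one (4 * n + 1)
  have hP4n3 := P_two_mul_add_one (2 * n + 1)
  have hX := ncard_pairCounts_two_mul_add_one (2 * n + 1) 0 0
  have hY := ncard_pairCounts_two_mul_add_one (2 * n + 1) 0 1
  have hYX := ncard_pairCounts_two_mul_add_two_zero_one (2 * n)
  have hK := ncard_extendableCounts_four_mul_add_one n
  ring_nf at hP8n4 hP4n2 hP8n3 hP4n3 hX hY hYX hK ⊢
  omega
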